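/- Let X be a measurable space, let κ₁ and κ₂ be Markov kernels from X to X, let μ be a probability measure on X, and let δ ≥ 0 be such that for every probability measure ν on X, ‖νκ₁ − νκ₂‖_TV ≤ δ. Define the H-step occupancy measures λ₁ := Σ_{t=0}^{H−1} μκ₁^t and λ₂ := Σ_{t=0}^{H−1} μκ₂^t for H ∈ ℕ. Then ‖λ₁ − λ₂‖_TV ≤ (H(H−1)/2)·δ. -/

import Mathlib

open MeasureTheory ProbabilityTheory

/-- Pushing a finite measure through a Markov kernel yields a finite measure. -/
instance bindIsFiniteMeasure {X : Type*} [MeasurableSpace X] (μ : Measure X)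
    [IsFiniteMeasure μ] (κ : Kernel X X) [IsMarkovKernel κ] :
    IsFiniteMeasure (μ.bind κ) := by
  constructor
  rw [Measure.bind_apply MeasurableSet.univ (Kernel.measurable κ).aemeasurable]
  calc ∫⁻ x, (κ x) Set.univ ∂μ = ∫⁻ _, 1 ∂μ := by simp
    _ = μ Set.univ := by simp
    _ < ⊤ := measure_lt_top μ _

/-- The `t`-fold iterated bind `μ κ^t` of a measure `μ` along a kernel `κ`:
`μκ^0 = μ` and `μκ^(t+1) = (μκ^t)κ`. -/
noncomputable def iterBind {X : Type*} [MeasurableSpace X] (μ : Measure X)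
    (κ : Kernel X X) : ℕ → Measure X
  | 0 => μ
  | t + 1 => (iterBind μ κ t).bind κ

instance iterBindIsFiniteMeasure {X : Type*} [MeasurableSpace X] (μ : Measure X)
    [IsFiniteMeasure μ] (κ : Kernel X X) [IsMarkovKernel κ] (t : ℕ) :
    IsFiniteMeasure (iterBind μ κ t) := by
  induction t with
  | zero => exact inferInstanceAs (IsFiniteMeasure μ)
  | succ t ih => exact @bindIsFiniteMeasure X _ (iterBind μ κ t) ih κ _

/-- The total variation norm `‖μ − ν‖_TV` of the difference of two finite measures:
the total mass of the total variation of the signed measure `μ − ν`. -/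
noncomputable def tvDist {X : Type*} [MeasurableSpace X] (μ ν : Measure X)
    [IsFiniteMeasure μ] [IsFiniteMeasure ν] : ℝ :=
  ((μ.toSignedMeasure - ν.toSignedMeasure).totalVariation Set.univ).toReal

instance finsetSumIsFiniteMeasure {X : Type*} [MeasurableSpace X] (f : ℕ → Measure X)
    [hf : ∀ t, IsFiniteMeasure (f t)] (H : ℕ) :
    IsFiniteMeasure (∑ t ∈ Finset.range H, f t) := by
  induction H with
  | zero => simpa using inferInstanceAs (IsFiniteMeasure (0 : Measure X))
  | succ H ih =>
      rw [Finset.sum_range_succ]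
      exact @MeasureTheory.isFiniteMeasureAdd X _ _ _ ih (hf H)

/-!
Since `μκ₁^(t+1) - μκ₂^(t+1) = (μκ₁^t - μκ₂^t)κ₁ + (μκ₂^t κ₁ - μκ₂^t κ₂)` and a Markov kernel
does not increase total variation, the `t`-th terms of the two occupancy measures are within
`t δ` of each other; summing over `t < H` gives `H (H - 1) / 2 · δ`.
-/

instance iterBindIsProbabilityMeasure {X : Type*} [MeasurableSpace X] (μ : Measure X)
    [IsProbabilityMeasure μ] (κ : Kernel X X) [IsMarkovKernel κ] (t : ℕ) :
    IsProbabilityMeasure (iterBind μ κ t) := by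
  induction t with
  | zero => exact inferInstanceAs (IsProbabilityMeasure μ)
  | succ t ih => exact inferInstanceAs (IsProbabilityMeasure ((iterBind μ κ t).bind κ))

section TotalVariation

variable {X : Type*} [MeasurableSpace X]

/-- The Jordan decomposition is the minimal way of writing `μ - ν` as a difference `p - n` of
finite measures. -/
lemma tvDist_le_of_add_eq_add {μ ν p n : Measure X} [IsFiniteMeasure μ] [IsFiniteMeasure ν]
    [IsFiniteMeasure p] [IsFiniteMeasure n] (h : μ + n = ν + p) :
    tvDist μ ν ≤ p.real Set.univ + n.real Set.univ := by
  have hsub : μ.toSignedMeasure - ν.toSignedMeasure = p.toSignedMeasure - n.toSignedMeasure := by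
    rw [sub_eq_sub_iff_add_eq_add, ← Measure.toSignedMeasure_add, ← Measure.toSignedMeasure_add]
    exact Measure.toSignedMeasure_congr (h.trans (add_comm _ _))
  have hvar : (μ.toSignedMeasure - ν.toSignedMeasure).totalVariation ≤ p + n := by
    rw [hsub, SignedMeasure.totalVariation_eq_variation]
    simpa using VectorMeasure.variation_sub_le (μ := p.toSignedMeasure) (ν := n.toSignedMeasure)
  rw [← measureReal_add_apply]
  exact ENNReal.toReal_mono (measure_ne_top _ _) (hvar Set.univ)

lemma exists_add_eq_add_tvDist_eq (μ ν : Measure X) [IsFiniteMeasure μ] [IsFiniteMeasure ν] :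
    ∃ (p n : Measure X) (_ : IsFiniteMeasure p) (_ : IsFiniteMeasure n),
      μ + n = ν + p ∧ tvDist μ ν = p.real Set.univ + n.real Set.univ := by
  set j := (μ.toSignedMeasure - ν.toSignedMeasure).toJordanDecomposition with hj
  refine ⟨j.posPart, j.negPart, inferInstance, inferInstance, ?_, ?_⟩
  · have hjordan := (μ.toSignedMeasure - ν.toSignedMeasure).toSignedMeasure_toJordanDecomposition
    rw [← hj, JordanDecomposition.toSignedMeasure, sub_eq_sub_iff_add_eq_add] at hjordan
    rw [← Measure.toSignedMeasure_eq_toSignedMeasure_iff, Measure.toSignedMeasure_add,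
      Measure.toSignedMeasure_add, ← hjordan, add_comm]
  · rw [tvDist, SignedMeasure.totalVariation, ← hj, ← measureReal_def, measureReal_add_apply]

lemma tvDist_self (μ : Measure X) [IsFiniteMeasure μ] : tvDist μ μ = 0 := by
  simp [tvDist, SignedMeasure.totalVariation_zero]

lemma tvDist_triangle (μ ν ρ : Measure X) [IsFiniteMeasure μ] [IsFiniteMeasure ν]
    [IsFiniteMeasure ρ] : tvDist μ ρ ≤ tvDist μ ν + tvDist ν ρ := by
  obtain ⟨p₁, n₁, _, _, h₁, hd₁⟩ := exists_add_eq_add_tvDist_eq μ ν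
  obtain ⟨p₂, n₂, _, _, h₂, hd₂⟩ := exists_add_eq_add_tvDist_eq ν ρ
  have h : μ + (n₁ + n₂) = ρ + (p₁ + p₂) := by
    calc μ + (n₁ + n₂) = (μ + n₁) + n₂ := (add_assoc _ _ _).symm
      _ = (ν + n₂) + p₁ := by rw [h₁]; abel
      _ = ρ + (p₁ + p₂) := by rw [h₂]; abel
  have := tvDist_le_of_add_eq_add h
  rw [measureReal_add_apply, measureReal_add_apply] at this
  linarith

lemma tvDist_add_le (μ₁ μ₂ ν₁ ν₂ : Measure X) [IsFiniteMeasure μ₁] [IsFiniteMeasure μ₂]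
    [IsFiniteMeasure ν₁] [IsFiniteMeasure ν₂] :
    tvDist (μ₁ + μ₂) (ν₁ + ν₂) ≤ tvDist μ₁ ν₁ + tvDist μ₂ ν₂ := by
  obtain ⟨p₁, n₁, _, _, h₁, hd₁⟩ := exists_add_eq_add_tvDist_eq μ₁ ν₁
  obtain ⟨p₂, n₂, _, _, h₂, hd₂⟩ := exists_add_eq_add_tvDist_eq μ₂ ν₂
  have h : (μ₁ + μ₂) + (n₁ + n₂) = (ν₁ + ν₂) + (p₁ + p₂) := by
    calc (μ₁ + μ₂) + (n₁ + n₂) = (μ₁ + n₁) + (μ₂ + n₂) := by abel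
      _ = (ν₁ + ν₂) + (p₁ + p₂) := by rw [h₁, h₂]; abel
  have := tvDist_le_of_add_eq_add h
  rw [measureReal_add_apply, measureReal_add_apply] at this
  linarith

lemma tvDist_sum_range_le (f g : ℕ → Measure X) [∀ t, IsFiniteMeasure (f t)]
    [∀ t, IsFiniteMeasure (g t)] (H : ℕ) :
    tvDist (∑ t ∈ Finset.range H, f t) (∑ t ∈ Finset.range H, g t)
      ≤ ∑ t ∈ Finset.range H, tvDist (f t) (g t) := by
  induction H with
  | zero => simp only [Finset.sum_range_zero, tvDist_self, le_refl]
  | succ H ih =>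
    simp only [Finset.sum_range_succ]
    exact (tvDist_add_le _ _ _ _).trans (by linarith)

lemma tvDist_bind_le {Y : Type*} [MeasurableSpace Y] (μ ν : Measure X) [IsFiniteMeasure μ]
    [IsFiniteMeasure ν] (κ : Kernel X Y) [IsMarkovKernel κ] :
    tvDist (μ.bind κ) (ν.bind κ) ≤ tvDist μ ν := by
  obtain ⟨p, n, _, _, h, hd⟩ := exists_add_eq_add_tvDist_eq μ ν
  have hbind : μ.bind κ + n.bind κ = ν.bind κ + p.bind κ := by
    rw [← Measure.comp_add, ← Measure.comp_add, h]
  simpa [hd, Measure.real] using tvDist_le_of_add_eq_add hbind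

end TotalVariation

lemma tvDist_iterBind_le {X : Type*} [MeasurableSpace X] {κ₁ κ₂ : Kernel X X}
    [IsMarkovKernel κ₁] [IsMarkovKernel κ₂] {δ : ℝ}
    (hstep : ∀ (ν : Measure X) [IsProbabilityMeasure ν], tvDist (ν.bind κ₁) (ν.bind κ₂) ≤ δ)
    (μ : Measure X) [IsProbabilityMeasure μ] (t : ℕ) :
    tvDist (iterBind μ κ₁ t) (iterBind μ κ₂ t) ≤ t * δ := by
  induction t with
  | zero => simp [iterBind, tvDist_self]
  | succ t ih =>
    calc tvDist ((iterBind μ κ₁ t).bind κ₁) ((iterBind μ κ₂ t).bind κ₂)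
        ≤ tvDist ((iterBind μ κ₁ t).bind κ₁) ((iterBind μ κ₂ t).bind κ₁)
          + tvDist ((iterBind μ κ₂ t).bind κ₁) ((iterBind μ κ₂ t).bind κ₂) :=
          tvDist_triangle _ _ _
      _ ≤ t * δ + δ := add_le_add ((tvDist_bind_le _ _ κ₁).trans ih) (hstep _)
      _ = (t + 1 : ℕ) * δ := by push_cast; ring

lemma sum_range_natCast {K : Type*} [Field K] [CharZero K] (H : ℕ) :
    ∑ t ∈ Finset.range H, (t : K) = H * (H - 1) / 2 := by
  induction H with
  | zero => simp
  | succ H ih =>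
    rw [Finset.sum_range_succ, ih]
    push_cast
    ring

theorem tvDist_occupancy_le_general {X : Type*} [MeasurableSpace X]
    (κ₁ κ₂ : Kernel X X) [IsMarkovKernel κ₁] [IsMarkovKernel κ₂]
    (δ : ℝ)
    (hstep : ∀ (ν : Measure X) [IsProbabilityMeasure ν],
      tvDist (ν.bind κ₁) (ν.bind κ₂) ≤ δ)
    (μ : Measure X) [IsProbabilityMeasure μ] (H : ℕ) :
    tvDist (∑ t ∈ Finset.range H, iterBind μ κ₁ t)
        (∑ t ∈ Finset.range H, iterBind μ κ₂ t)
      ≤ (H * (H - 1) / 2 : ℝ) * δ := by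
  calc tvDist (∑ t ∈ Finset.range H, iterBind μ κ₁ t) (∑ t ∈ Finset.range H, iterBind μ κ₂ t)
      ≤ ∑ t ∈ Finset.range H, tvDist (iterBind μ κ₁ t) (iterBind μ κ₂ t) :=
        tvDist_sum_range_le _ _ H
    _ ≤ ∑ t ∈ Finset.range H, (t : ℝ) * δ :=
        Finset.sum_le_sum fun t _ => tvDist_iterBind_le hstep μ t
    _ = (H * (H - 1) / 2 : ℝ) * δ := by rw [← Finset.sum_mul, sum_range_natCast]

/-- If the one-step total variation discrepancy between two Markov
kernels `κ₁`, `κ₂` is uniformly bounded by `δ` over all initial probability measures,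
then the `H`-step occupancy measures `λᵢ = ∑_{t=0}^{H−1} μκᵢ^t` satisfy
`‖λ₁ − λ₂‖_TV ≤ (H(H−1)/2)·δ`. -/
theorem tvDist_occupancy_le {X : Type*} [MeasurableSpace X]
    (κ₁ κ₂ : Kernel X X) [IsMarkovKernel κ₁] [IsMarkovKernel κ₂]
    (δ : ℝ) (hδ : 0 ≤ δ)
    (hstep : ∀ (ν : Measure X) [IsProbabilityMeasure ν],
      tvDist (ν.bind κ₁) (ν.bind κ₂) ≤ δ)
    (μ : Measure X) [IsProbabilityMeasure μ] (H : ℕ) :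
    tvDist (∑ t ∈ Finset.range H, iterBind μ κ₁ t)
        (∑ t ∈ Finset.range H, iterBind μ κ₂ t)
      ≤ (H * (H - 1) / 2 : ℝ) * δ :=
  tvDist_occupancy_le_general κ₁ κ₂ δ hstep μ H
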